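/- arXiv:2102.03181 — 4 statements merged into one kernel-verified Lean document; each statement's English description precedes it below -/
import Mathlib

section
/- Let C be a category with a faithful representable functor Q : C → Set represented by (A₀, x₀), and suppose for every object A there exists a morphism α : A → A₀ with Q(α) surjective. Let Φ be an automorphism of C. Then there exists an epimorphism η : A₀ → Φ(A₀). -/
/-!
Apply the surjectivity hypothesis to `Ψ(A₀)`: the resulting map `Ψ(A₀) ⟶ A₀` is epi because `Q` is
faithful, and the automorphism `Φ` sends it to an epimorphism `A₀ = Φ(Ψ(A₀)) ⟶ Φ(A₀)`.
-/

open CategoryTheory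

namespace CategoryTheory.Functor

variable {C : Type*} [Category C]

theorem epi_of_surjective_map (F : C ⥤ Type*) [F.Faithful] {X Y : C} {f : X ⟶ Y}
    (hf : Function.Surjective (F.map f)) : Epi f :=
  F.epi_of_epi_map ((epi_iff_surjective _).2 hf)

theorem isEquivalence_of_comp_eq_id {Φ Ψ : C ⥤ C} (hΦΨ : Φ ⋙ Ψ = 𝟭 C)
    (hΨΦ : Ψ ⋙ Φ = 𝟭 C) : Φ.IsEquivalence :=
  (Equivalence.mk Φ Ψ (eqToIso hΦΨ.symm) (eqToIso hΨΦ)).isEquivalence_functor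

end CategoryTheory.Functor

theorem stmt_3_general {C : Type*} [Category C] (Q : C ⥤ Type*) [Q.Faithful]
    (A₀ : C)
    (hsurj : ∀ A : C, ∃ f : A ⟶ A₀, Function.Surjective (Q.map f))
    (Φ Ψ : C ⥤ C) (hΦΨ : Φ ⋙ Ψ = 𝟭 C) (hΨΦ : Ψ ⋙ Φ = 𝟭 C) :
    ∃ η : A₀ ⟶ Φ.obj A₀, Epi η := by
  obtain ⟨f, hf⟩ := hsurj (Ψ.obj A₀)
  have : Epi f := Q.epi_of_surjective_map hf
  have : Φ.IsEquivalence := Functor.isEquivalence_of_comp_eq_id hΦΨ hΨΦ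
  exact ⟨eqToHom (Functor.congr_obj hΨΦ A₀).symm ≫ Φ.map f, inferInstance⟩

/-- If `Q : C ⥤ Type` is faithful, represented by `(A₀, x₀)`, every object admits a
morphism to `A₀` with surjective underlying map, and `Φ` is a strict automorphism of `C`
(with strict inverse `Ψ`), then there exists an epimorphism `η : A₀ ⟶ Φ(A₀)`. -/
theorem stmt_3 {C : Type*} [Category C] (Q : C ⥤ Type*) [Q.Faithful]
    (A₀ : C) (x₀ : Q.obj A₀)
    (hrep : ∀ (A : C) (a : Q.obj A), ∃! α : A₀ ⟶ A, Q.map α x₀ = a)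
    (hsurj : ∀ A : C, ∃ f : A ⟶ A₀, Function.Surjective (Q.map f))
    (Φ Ψ : C ⥤ C) (hΦΨ : Φ ⋙ Ψ = 𝟭 C) (hΨΦ : Ψ ⋙ Φ = 𝟭 C) :
    ∃ η : A₀ ⟶ Φ.obj A₀, Epi η :=
  stmt_3_general Q A₀ hsurj Φ Ψ hΦΨ hΨΦ
end

section
/- Let C be a category with faithful functor Q : C → Set represented by (A₀, x₀), and suppose for every object A there is a morphism α : A → A₀ with Q(α) surjective. Let Φ be an automorphism of C. Define, for each object A and each a ∈ Q(A), s_A(a) = Q(Φ(α_a) ∘ η)(x₀), where α_a : A₀ → A is the unique morphism with Q(α_a)(x₀) = a and η : A₀ → Φ(A₀) is a fixed epimorphism of the form Φ(η₀) with η₀ : Φ⁻¹(A₀) → A₀ having Q(η₀) surjective. Then each map s_A : Q(A) → Q(Φ(A)) is injective. -/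
/-!
Two elements with the same image under `s_A` give two morphisms `A₀ ⟶ Φ(A)` sending `x₀` to the
same point, hence equal by representability. Cancelling the isomorphism `eqToHom` and using that
`Φ` is faithful (it has a strict inverse) yields `η₀ ≫ α_a = η₀ ≫ α_b`; since `Q(η₀)` hits `x₀`,
evaluating at a preimage gives `a = Q(α_a)(x₀) = Q(α_b)(x₀) = b`.
-/

open CategoryTheory

namespace CategoryTheory.Functor

universe v₁ v₂ u₁ u₂ w

variable {C : Type u₁} [Category.{v₁} C]

theorem faithful_of_comp_eq_id {D : Type u₂} [Category.{v₂} D] {Φ : C ⥤ D} {Ψ : D ⥤ C} (h : Φ ⋙ Ψ = 𝟭 C) : Φ.Faithful :=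
  haveI : (Φ ⋙ Ψ).Faithful := h ▸ inferInstance
  Faithful.of_comp Φ Ψ

theorem map_eq_of_comp_eq_of_surjective_map (Q : C ⥤ Type w) {X Y Z : C} {e : X ⟶ Y}
    (he : Function.Surjective (Q.map e)) {f g : Y ⟶ Z} (h : e ≫ f = e ≫ g)
    (y : Q.obj Y) : Q.map f y = Q.map g y := by
  obtain ⟨x, rfl⟩ := he y
  simpa only [Q.map_comp, types_comp_apply] using congrArg (fun φ => Q.map φ x) h

end CategoryTheory.Functor

theorem stmt_4_general {C : Type*} [Category C] (Q : C ⥤ Type*)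
    (A₀ : C) (x₀ : Q.obj A₀)
    (α : ∀ (A : C), Q.obj A → (A₀ ⟶ A))
    (hα : ∀ (A : C) (a : Q.obj A), Q.map (α A a) x₀ = a)
    (huniq : ∀ (A : C) (a : Q.obj A) (β : A₀ ⟶ A), Q.map β x₀ = a → β = α A a)
    (Φ Ψ : C ⥤ C) (hΦΨ : Φ ⋙ Ψ = 𝟭 C) (hΨΦ : Ψ ⋙ Φ = 𝟭 C)
    (η₀ : Ψ.obj A₀ ⟶ A₀) (hη₀ : Function.Surjective (Q.map η₀))
    (A : C) :
    Function.Injective (fun a : Q.obj A =>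
      Q.map (eqToHom ((Functor.congr_obj hΨΦ A₀).symm) ≫ Φ.map η₀ ≫ Φ.map (α A a)) x₀) := by
  intro a b hab
  have hmor : eqToHom ((Functor.congr_obj hΨΦ A₀).symm) ≫ Φ.map η₀ ≫ Φ.map (α A a) =
      eqToHom ((Functor.congr_obj hΨΦ A₀).symm) ≫ Φ.map η₀ ≫ Φ.map (α A b) :=
    (huniq _ _ _ hab).trans (huniq _ _ _ rfl).symm
  have : Φ.Faithful := Functor.faithful_of_comp_eq_id hΦΨ
  have hcomp : η₀ ≫ α A a = η₀ ≫ α A b :=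
    Φ.map_injective (by simpa only [Φ.map_comp, cancel_epi] using hmor)
  have hx₀ := Q.map_eq_of_comp_eq_of_surjective_map hη₀ hcomp x₀
  rwa [hα, hα] at hx₀

/-- Setup: `Q : C ⥤ Type` faithful, represented by `(A₀, x₀)` via the choice of unique
morphisms `α A a : A₀ ⟶ A`; every object admits a morphism to `A₀` with surjective
underlying map; `Φ` a strict automorphism of `C` with strict inverse `Ψ`;
`η₀ : Ψ(A₀) ⟶ A₀` with `Q(η₀)` surjective and `η := Φ(η₀) : A₀ ⟶ Φ(A₀)`.
Then the main function `s_A : a ↦ Q(Φ(α_a) ∘ η)(x₀)` is injective. -/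
theorem stmt_4 {C : Type*} [Category C] (Q : C ⥤ Type*) [Q.Faithful]
    (A₀ : C) (x₀ : Q.obj A₀)
    (α : ∀ (A : C), Q.obj A → (A₀ ⟶ A))
    (hα : ∀ (A : C) (a : Q.obj A), Q.map (α A a) x₀ = a)
    (huniq : ∀ (A : C) (a : Q.obj A) (β : A₀ ⟶ A), Q.map β x₀ = a → β = α A a)
    (hsurj : ∀ A : C, ∃ f : A ⟶ A₀, Function.Surjective (Q.map f))
    (Φ Ψ : C ⥤ C) (hΦΨ : Φ ⋙ Ψ = 𝟭 C) (hΨΦ : Ψ ⋙ Φ = 𝟭 C)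
    (η₀ : Ψ.obj A₀ ⟶ A₀) (hη₀ : Function.Surjective (Q.map η₀))
    (A : C) :
    Function.Injective (fun a : Q.obj A =>
      Q.map (eqToHom ((Functor.congr_obj hΨΦ A₀).symm) ≫ Φ.map η₀ ≫ Φ.map (α A a)) x₀) :=
  stmt_4_general Q A₀ x₀ α hα huniq Φ Ψ hΦΨ hΨΦ η₀ hη₀ A
end

section
/- With the setup of the previous statement (s_A(a) = Q(Φ(α_a) ∘ η)(x₀)), for every morphism μ : A → B in C the square commutes: Q(Φ(μ)) ∘ s_A = s_B ∘ Q(μ). -/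
open CategoryTheory

theorem unique_hom_map_eq_comp {C : Type*} [Category C] (Q : C ⥤ Type*) {A₀ : C}
    (x₀ : Q.obj A₀) (α : ∀ (A : C), Q.obj A → (A₀ ⟶ A))
    (hα : ∀ (A : C) (a : Q.obj A), Q.map (α A a) x₀ = a)
    (huniq : ∀ (A : C) (a : Q.obj A) (β : A₀ ⟶ A), Q.map β x₀ = a → β = α A a)
    {A B : C} (μ : A ⟶ B) (a : Q.obj A) :
    α B (Q.map μ a) = α A a ≫ μ :=
  (huniq B _ _ (by rw [Q.map_comp, types_comp_apply, hα])).symm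

theorem stmt_5_general {C : Type*} [Category C] (Q : C ⥤ Type*)
    (A₀ : C) (x₀ : Q.obj A₀)
    (α : ∀ (A : C), Q.obj A → (A₀ ⟶ A))
    (hα : ∀ (A : C) (a : Q.obj A), Q.map (α A a) x₀ = a)
    (huniq : ∀ (A : C) (a : Q.obj A) (β : A₀ ⟶ A), Q.map β x₀ = a → β = α A a)
    (Φ Ψ : C ⥤ C) (hΨΦ : Ψ ⋙ Φ = 𝟭 C)
    (η₀ : Ψ.obj A₀ ⟶ A₀)
    (s : ∀ (A : C), Q.obj A → Q.obj (Φ.obj A))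
    (hs : ∀ (A : C) (a : Q.obj A),
      s A a = Q.map (eqToHom ((Functor.congr_obj hΨΦ A₀).symm) ≫ Φ.map η₀ ≫ Φ.map (α A a)) x₀)
    {A B : C} (μ : A ⟶ B) (a : Q.obj A) :
    Q.map (Φ.map μ) (s A a) = s B (Q.map μ a) := by
  rw [hs, hs, unique_hom_map_eq_comp Q x₀ α hα huniq μ a, Φ.map_comp]
  simp only [Functor.map_comp_apply]

/-- With the setup of the main function `s_A(a) = Q(Φ(α_a) ∘ η)(x₀)`,
where `η = Φ(η₀)` with `Q(η₀)` surjective, for every morphism `μ : A ⟶ B`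
the square commutes: `Q(Φ(μ)) ∘ s_A = s_B ∘ Q(μ)`. -/
theorem stmt_5 {C : Type*} [Category C] (Q : C ⥤ Type*) [Q.Faithful]
    (A₀ : C) (x₀ : Q.obj A₀)
    (α : ∀ (A : C), Q.obj A → (A₀ ⟶ A))
    (hα : ∀ (A : C) (a : Q.obj A), Q.map (α A a) x₀ = a)
    (huniq : ∀ (A : C) (a : Q.obj A) (β : A₀ ⟶ A), Q.map β x₀ = a → β = α A a)
    (hsurj : ∀ A : C, ∃ f : A ⟶ A₀, Function.Surjective (Q.map f))
    (Φ Ψ : C ⥤ C) (hΦΨ : Φ ⋙ Ψ = 𝟭 C) (hΨΦ : Ψ ⋙ Φ = 𝟭 C)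
    (η₀ : Ψ.obj A₀ ⟶ A₀) (hη₀ : Function.Surjective (Q.map η₀))
    (s : ∀ (A : C), Q.obj A → Q.obj (Φ.obj A))
    (hs : ∀ (A : C) (a : Q.obj A),
      s A a = Q.map (eqToHom ((Functor.congr_obj hΨΦ A₀).symm) ≫ Φ.map η₀ ≫ Φ.map (α A a)) x₀)
    {A B : C} (μ : A ⟶ B) (a : Q.obj A) :
    Q.map (Φ.map μ) (s A a) = s B (Q.map μ a) :=
  stmt_5_general Q A₀ x₀ α hα huniq Φ Ψ hΨΦ η₀ s hs μ a
end

section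
/- With the setup of the main function s_A, the family s is a 'C-bijection family' in the following sense: for every object A and any two morphisms γ, δ : Φ(A) → B in C, if Q(γ) ∘ s_A = Q(δ) ∘ s_A then γ = δ. -/
/-!
Because `α` and `x₀` represent `Q` and `Q` is faithful, the morphisms `α A a : A₀ ⟶ A`
are jointly epimorphic; `Φ` is an equivalence, hence a left adjoint, so the `Φ.map (α A a)`
are jointly epimorphic as well. Finally `Q γ (s A a) = Q δ (s A a)` says that
`η ≫ Φ.map (α A a) ≫ γ` and `η ≫ Φ.map (α A a) ≫ δ` agree at `x₀`, hence coincide by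
uniqueness of representing morphisms, and `η` is cancelled since it is an epimorphism.
-/

open CategoryTheory

namespace CategoryTheory

variable {C D : Type*} [Category C] [Category D]

def JointlyEpi {ι : Sort*} {X Y : C} (f : ι → (X ⟶ Y)) : Prop :=
  ∀ ⦃Z : C⦄ (g h : Y ⟶ Z), (∀ i, f i ≫ g = f i ≫ h) → g = h

theorem jointlyEpi_of_map_apply_surjective (Q : C ⥤ Type*) [Q.Faithful] {X Y : C}
    (x : Q.obj X) {ι : Sort*} (f : ι → (X ⟶ Y))
    (hf : Function.Surjective fun i => Q.map (f i) x) : JointlyEpi f := by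
  intro Z g h H
  apply Q.map_injective
  ext y
  obtain ⟨i, rfl⟩ := hf y
  simpa using congrArg (fun k => Q.map k x) (H i)

theorem Adjunction.jointlyEpi_map {F : C ⥤ D} {G : D ⥤ C} (adj : F ⊣ G) {ι : Sort*}
    {X Y : C} {f : ι → (X ⟶ Y)} (hf : JointlyEpi f) : JointlyEpi fun i => F.map (f i) := by
  intro Z g h H
  apply adj.homEquiv Y Z |>.injective
  exact hf _ _ fun i => by
    rw [← adj.homEquiv_naturality_left, ← adj.homEquiv_naturality_left, H i]

end CategoryTheory

theorem stmt_6_general {C : Type*} [Category C] (Q : C ⥤ Type*) [Q.Faithful]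
    (A₀ : C) (x₀ : Q.obj A₀)
    (α : ∀ (A : C), Q.obj A → (A₀ ⟶ A))
    (hα : ∀ (A : C) (a : Q.obj A), Q.map (α A a) x₀ = a)
    (huniq : ∀ (A : C) (a : Q.obj A) (β : A₀ ⟶ A), Q.map β x₀ = a → β = α A a)
    (Φ Ψ : C ⥤ C) (hΦΨ : Φ ⋙ Ψ = 𝟭 C) (hΨΦ : Ψ ⋙ Φ = 𝟭 C)
    (η : A₀ ⟶ Φ.obj A₀) (hη : Epi η)
    (s : ∀ (A : C), Q.obj A → Q.obj (Φ.obj A))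
    (hs : ∀ (A : C) (a : Q.obj A), s A a = Q.map (η ≫ Φ.map (α A a)) x₀)
    (A B : C) (γ δ : Φ.obj A ⟶ B)
    (h : ∀ a : Q.obj A, Q.map γ (s A a) = Q.map δ (s A a)) :
    γ = δ := by
  have hαEpi : JointlyEpi (α A) :=
    jointlyEpi_of_map_apply_surjective Q x₀ (α A) fun a => ⟨a, hα A a⟩
  have adj : Φ ⊣ Ψ :=
    (CategoryTheory.Equivalence.mk Φ Ψ (eqToIso hΦΨ.symm) (eqToIso hΨΦ)).toAdjunction
  refine adj.jointlyEpi_map hαEpi γ δ fun a => ?_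
  have hγ : (η ≫ Φ.map (α A a)) ≫ γ = α B (Q.map γ (s A a)) :=
    huniq _ _ _ (by simp [hs])
  have hδ : (η ≫ Φ.map (α A a)) ≫ δ = α B (Q.map δ (s A a)) :=
    huniq _ _ _ (by simp [hs])
  rw [← cancel_epi η, ← Category.assoc, ← Category.assoc, hγ, hδ, h a]

/-- With the setup of the main function `s_A(a) = Q(Φ(α_a) ∘ η)(x₀)` (`η : A₀ ⟶ Φ(A₀)`
an epimorphism), the family `s` is a `C`-bijection family: for every object `A` and any
two morphisms `γ, δ : Φ(A) ⟶ B`, if `Q(γ) ∘ s_A = Q(δ) ∘ s_A` then `γ = δ`. -/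
theorem stmt_6 {C : Type*} [Category C] (Q : C ⥤ Type*) [Q.Faithful]
    (A₀ : C) (x₀ : Q.obj A₀)
    (α : ∀ (A : C), Q.obj A → (A₀ ⟶ A))
    (hα : ∀ (A : C) (a : Q.obj A), Q.map (α A a) x₀ = a)
    (huniq : ∀ (A : C) (a : Q.obj A) (β : A₀ ⟶ A), Q.map β x₀ = a → β = α A a)
    (hsurj : ∀ A : C, ∃ f : A ⟶ A₀, Function.Surjective (Q.map f))
    (Φ Ψ : C ⥤ C) (hΦΨ : Φ ⋙ Ψ = 𝟭 C) (hΨΦ : Ψ ⋙ Φ = 𝟭 C)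
    (η : A₀ ⟶ Φ.obj A₀) (hη : Epi η)
    (s : ∀ (A : C), Q.obj A → Q.obj (Φ.obj A))
    (hs : ∀ (A : C) (a : Q.obj A), s A a = Q.map (η ≫ Φ.map (α A a)) x₀)
    (A B : C) (γ δ : Φ.obj A ⟶ B)
    (h : ∀ a : Q.obj A, Q.map γ (s A a) = Q.map δ (s A a)) :
    γ = δ :=
  stmt_6_general Q A₀ x₀ α hα huniq Φ Ψ hΦΨ hΨΦ η hη s hs A B γ δ h
end
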